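/- arXiv:1603.05765 — 3 statements merged into one kernel-verified Lean document; each statement's English description precedes it below -/
import Mathlib

section
/- Let n, m be positive natural numbers and let r be a real number with 0 ≤ r ≤ 1 such that n·r is an integer. Set b = 1 - r/m. Then n·b ≤ ⌊(n+1)·b⌋. -/
/-- If `n, m ≥ 1`, `r ∈ [0,1]` with `n·r ∈ ℤ`, and `b = 1 - r/m`,
then `n·b ≤ ⌊(n+1)·b⌋`. -/
theorem stmt0 (n m : ℕ) (hn : 0 < n) (hm : 0 < m) (r : ℝ)
    (hr0 : 0 ≤ r) (hr1 : r ≤ 1) (hnr : ∃ k : ℤ, (n : ℝ) * r = k)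
    (b : ℝ) (hb : b = 1 - r / m) :
    (n : ℝ) * b ≤ (⌊((n : ℝ) + 1) * b⌋ : ℝ) := by
  obtain ⟨k, hk⟩ := hnr
  have hmR : (0:ℝ) < (m:ℝ) := by exact_mod_cast hm
  set z : ℤ := (n : ℤ) - k / m with hz
  have e1 : 0 ≤ k % m := Int.emod_nonneg k (by exact_mod_cast hm.ne')
  have e2 : k % m < m := Int.emod_lt_of_pos k (by exact_mod_cast hm)
  have hem : k % m = k - m * (k / m) := Int.emod_def k m
  have key1 : (((m : ℤ) * (k / m) : ℤ) : ℝ) ≤ ((k : ℤ) : ℝ) :=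
    Int.cast_le.mpr (by omega)
  have key2 : (((k - (m : ℤ) * (k / m)) : ℤ) : ℝ) ≤ (((m : ℤ) - 1 : ℤ) : ℝ) :=
    Int.cast_le.mpr (by omega)
  push_cast at key1 key2
  set q : ℝ := ((k / (m : ℤ) : ℤ) : ℝ) with hq
  have hq1 : q ≤ (k : ℝ) / m := by
    rw [le_div_iff₀ hmR]; nlinarith
  have h1 : (n:ℝ) * b ≤ (z:ℝ) := by
    rw [hb]
    push_cast [hz]
    rw [mul_sub, mul_one, mul_div_assoc', hk]
    linarith
  have h2 : (z:ℝ) ≤ ((n:ℝ) + 1) * b := by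
    rw [hb]
    push_cast [hz]
    have expand : ((n:ℝ) + 1) * (1 - r / m) = (n:ℝ) + 1 - ((k:ℝ) + r) / m := by
      field_simp
      nlinarith [hk]
    rw [expand]
    have : ((k:ℝ) + r) / m ≤ 1 + q := by
      rw [div_le_iff₀ hmR]; nlinarith
    linarith
  calc (n:ℝ) * b ≤ (z:ℝ) := h1
    _ ≤ (⌊((n : ℝ) + 1) * b⌋ : ℝ) := by
        exact_mod_cast Int.le_floor.mpr h2
end

section
/- Let R ⊂ [0,1] be a finite set of rational numbers. Then there exists a finite set S ⊂ (0,1] of rational numbers with the following property: for every finite family b₁,…,b_t of elements of Φ(R) and natural numbers α₁,…,α_t, if s := 1 - Σᵢ bᵢ·αᵢ > 0, then s can be written as s = s'/m for some s' ∈ S and some positive natural number m. Consequently, for every l ∈ ℕ≥1, the number 1 - s/l belongs to Φ(S). -/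
/-- The set of hyperstandard multiplicities associated to `R`. -/
def hyperstd (R : Set ℚ) : Set ℚ :=
  {b | ∃ r ∈ R, ∃ m : ℕ, 1 ≤ m ∧ b = 1 - r / m}

set_option maxHeartbeats 2000000 in
/-- For a finite set `R ⊂ [0,1]` of rationals there is a finite set
`S ⊂ (0,1]` of rationals such that whenever `b₁,…,b_t ∈ Φ(R)`,
`α₁,…,α_t ∈ ℕ` and `s = 1 - Σ bᵢαᵢ > 0`, one has `s = s'/m` with `s' ∈ S`
and `m ≥ 1`; consequently `1 - s/l ∈ Φ(S)` for every `l ≥ 1`. -/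
theorem stmt10 (R : Finset ℚ) (hR : ∀ r ∈ R, 0 ≤ r ∧ r ≤ 1) :
    ∃ S : Finset ℚ, (∀ s ∈ S, 0 < s ∧ s ≤ 1) ∧
      ∀ (t : ℕ) (b : Fin t → ℚ) (α : Fin t → ℕ),
        (∀ i, b i ∈ hyperstd ↑R) →
        0 < 1 - ∑ i, b i * (α i : ℚ) →
        (∃ s' ∈ S, ∃ m : ℕ, 0 < m ∧
            1 - ∑ i, b i * (α i : ℚ) = s' / m) ∧
        (∀ l : ℕ, 1 ≤ l →
            (1 - (1 - ∑ i, b i * (α i : ℚ)) / l) ∈ hyperstd ↑S) := by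
  classical
  set N : ℕ := ∏ r ∈ R, r.den with hNdef
  have hNpos : 0 < N := Finset.prod_pos (fun r _ => r.pos)
  have hNQpos : (0:ℚ) < N := by exact_mod_cast hNpos
  have hNint : ∀ r ∈ R, ∃ z : ℤ, (N:ℚ) * r = z := by
    intro r hr
    have hdvd : r.den ∣ N := Finset.dvd_prod_of_mem _ hr
    obtain ⟨c, hc⟩ := hdvd
    refine ⟨c * r.num, ?_⟩
    push_cast
    rw [hc]
    push_cast
    rw [mul_comm (r.den:ℚ) c, mul_assoc]
    congr 1
    rw [mul_comm]
    exact_mod_cast Rat.mul_den_eq_num r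
  -- candidate finite sets
  set Q : Finset ℚ := (Finset.range (N+1)).image (fun k : ℕ => (k:ℚ)/(N:ℚ)) with hQdef
  set F : Finset ℚ :=
    ((Finset.range (N+1)) ×ˢ (R ×ˢ (Finset.range (N+1)))).image
      (fun p => (p.1 : ℚ)/N - 1 + p.2.1 / (p.2.2 : ℚ)) with hFdef
  set S : Finset ℚ := ((Q ∪ R) ∪ F).filter (fun s => 0 < s ∧ s ≤ 1) with hSdef
  have hSprop : ∀ s ∈ S, 0 < s ∧ s ≤ 1 := by
    intro s hs
    exact (Finset.mem_filter.mp hs).2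
  clear_value N Q F S
  refine ⟨S, hSprop, ?_⟩
  intro t b α hb hs
  -- main claim: first conjunct
  have key : ∃ s' ∈ S, ∃ m : ℕ, 0 < m ∧ 1 - ∑ i, b i * (α i : ℚ) = s' / m := by
    choose r hrR μ hμ hbi using hb
    have hrR' : ∀ i, r i ∈ R := fun i => hrR i
    have hr0 : ∀ i, 0 ≤ r i := fun i => (hR _ (hrR' i)).1
    have hr1 : ∀ i, r i ≤ 1 := fun i => (hR _ (hrR' i)).2
    have hμQ : ∀ i, (1:ℚ) ≤ (μ i : ℚ) := fun i => by exact_mod_cast hμ i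
    have hμpos : ∀ i, (0:ℚ) < (μ i : ℚ) := fun i => lt_of_lt_of_le one_pos (hμQ i)
    have hbnn : ∀ i, 0 ≤ b i := by
      intro i
      rw [hbi i]
      have : r i / (μ i : ℚ) ≤ 1 := by
        rw [div_le_one (hμpos i)]
        exact le_trans (hr1 i) (hμQ i)
      linarith
    have htermnn : ∀ i, 0 ≤ b i * (α i : ℚ) := fun i =>
      mul_nonneg (hbnn i) (by positivity)
    have hsumnn : (0:ℚ) ≤ ∑ i, b i * (α i : ℚ) :=
      Finset.sum_nonneg (fun i _ => htermnn i)
    have hsumlt : ∑ i, b i * (α i : ℚ) < 1 := by linarith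
    -- the special indices
    set J : Finset (Fin t) := Finset.univ.filter (fun i => 1 ≤ α i ∧ 2 ≤ μ i) with hJdef
    have hhalf : ∀ i ∈ J, (1/2 : ℚ) ≤ b i * (α i : ℚ) := by
      intro i hi
      obtain ⟨hα, hm⟩ := (Finset.mem_filter.mp hi).2
      have hb2 : (1/2 : ℚ) ≤ b i := by
        rw [hbi i]
        have h2 : (2:ℚ) ≤ (μ i : ℚ) := by exact_mod_cast hm
        have : r i / (μ i : ℚ) ≤ 1/2 := by
          rw [div_le_div_iff₀ (hμpos i) (by norm_num)]
          nlinarith [hr1 i]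
        linarith
      have hα1 : (1:ℚ) ≤ (α i : ℚ) := by exact_mod_cast hα
      nlinarith
    have hJcard : J.card ≤ 1 := by
      by_contra h
      push_neg at h
      obtain ⟨i, hi, j, hj, hij⟩ := Finset.one_lt_card.mp h
      have hpair : ({i, j} : Finset (Fin t)).sum (fun k => b k * (α k : ℚ))
          ≤ ∑ k, b k * (α k : ℚ) :=
        Finset.sum_le_sum_of_subset_of_nonneg (Finset.subset_univ _)
          (fun k _ _ => htermnn k)
      rw [Finset.sum_pair hij] at hpair
      have := hhalf i hi
      have := hhalf j hj
      linarith
    -- integrality of the non-special part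
    have hint : ∀ i ∈ Jᶜ, ∃ z : ℤ, (N:ℚ) * (b i * (α i : ℚ)) = z := by
      intro i hi
      have hni : ¬ (1 ≤ α i ∧ 2 ≤ μ i) := by
        have := Finset.mem_compl.mp hi
        simpa [hJdef] using this
      rcases Nat.lt_or_ge (α i) 1 with hα | hα
      · refine ⟨0, ?_⟩
        have : α i = 0 := Nat.lt_one_iff.mp hα
        simp [this]
      · have hm1 : μ i = 1 := by
          have hone := hμ i
          rcases Nat.lt_or_ge (μ i) 2 with hm | hm
          · omega
          · exact absurd ⟨hα, hm⟩ hni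
        obtain ⟨z, hz⟩ := hNint (r i) (hrR' i)
        refine ⟨(N - z) * α i, ?_⟩
        rw [hbi i, hm1]
        push_cast
        nlinarith [hz]
    have hsumint : ∃ z : ℤ, (N:ℚ) * (∑ i ∈ Jᶜ, b i * (α i : ℚ)) = z := by
      have hmem : ∀ i ∈ Jᶜ, (N:ℚ) * (b i * (α i : ℚ))
          ∈ AddMonoidHom.mrange (Int.castAddHom ℚ) := by
        intro i hi
        obtain ⟨z, hz⟩ := hint i hi
        exact ⟨z, hz.symm⟩
      have := AddSubmonoid.sum_mem (AddMonoidHom.mrange (Int.castAddHom ℚ))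
        hmem
      obtain ⟨z, hz⟩ := this
      refine ⟨z, ?_⟩
      rw [Finset.mul_sum]
      exact hz.symm
    obtain ⟨z, hz⟩ := hsumint
    set q : ℚ := 1 - ∑ i ∈ Jᶜ, b i * (α i : ℚ) with hqdef
    have hsplit : ∑ i, b i * (α i : ℚ)
        = (∑ i ∈ J, b i * (α i : ℚ)) + ∑ i ∈ Jᶜ, b i * (α i : ℚ) :=
      (Finset.sum_add_sum_compl J _).symm
    have hJnn : (0:ℚ) ≤ ∑ i ∈ J, b i * (α i : ℚ) :=
      Finset.sum_nonneg (fun i _ => htermnn i)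
    have hJcnn : (0:ℚ) ≤ ∑ i ∈ Jᶜ, b i * (α i : ℚ) :=
      Finset.sum_nonneg (fun i _ => htermnn i)
    have hqpos : 0 < q := by
      have : (∑ i ∈ J, b i * (α i : ℚ)) + ∑ i ∈ Jᶜ, b i * (α i : ℚ) < 1 := by
        rw [← hsplit]; exact hsumlt
      simp only [hqdef]
      linarith
    have hqle : q ≤ 1 := by simp only [hqdef]; linarith
    have hNq : (N:ℚ) * q = (N:ℤ) - z := by
      simp only [hqdef]
      push_cast
      rw [mul_sub, hz]
      ring
    have hzbound1 : (0:ℚ) < (N:ℤ) - z := by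
      rw [← hNq]; positivity
    have hzbound2 : ((N:ℤ) - z : ℚ) ≤ N := by
      rw [← hNq]
      nlinarith
    -- q = k/N with k ∈ range (N+1)
    have hqQ : q ∈ Q := by
      rw [hQdef, Finset.mem_image]
      have hk1 : (0:ℤ) < (N:ℤ) - z := by exact_mod_cast hzbound1
      have hk2 : ((N:ℤ) - z) ≤ (N:ℤ) := by exact_mod_cast hzbound2
      refine ⟨((N:ℤ) - z).toNat, ?_, ?_⟩
      · rw [Finset.mem_range]
        omega
      · have hh := Int.toNat_of_nonneg (le_of_lt hk1)
        have hcast : (((N:ℤ) - z).toNat : ℚ) = ((N:ℤ) - z : ℚ) := by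
          exact_mod_cast hh
        rw [hcast, ← hNq, mul_comm, mul_div_assoc, div_self (ne_of_gt hNQpos), mul_one]
    -- case split on J
    rcases Nat.lt_or_ge J.card 1 with hc0 | hc1
    · -- J empty
      have hJe : J = ∅ := Finset.card_eq_zero.mp (by omega)
      have hsq : 1 - ∑ i, b i * (α i : ℚ) = q := by
        simp only [hqdef]
        rw [hsplit, hJe]
        simp
      refine ⟨q, ?_, 1, one_pos, by rw [hsq]; norm_num⟩
      rw [hSdef, Finset.mem_filter]
      exact ⟨Finset.mem_union_left _ (Finset.mem_union_left _ hqQ), hqpos, hqle⟩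
    · -- J = {i₀}
      have hc : J.card = 1 := le_antisymm hJcard hc1
      obtain ⟨i₀, hi₀⟩ := Finset.card_eq_one.mp hc
      have hi₀J : i₀ ∈ J := by rw [hi₀]; exact Finset.mem_singleton_self _
      obtain ⟨hα₀, hm₀⟩ := (Finset.mem_filter.mp hi₀J).2
      have hb₀ : (1/2 : ℚ) ≤ b i₀ := by
        rw [hbi i₀]
        have h2 : (2:ℚ) ≤ (μ i₀ : ℚ) := by exact_mod_cast hm₀
        have : r i₀ / (μ i₀ : ℚ) ≤ 1/2 := by
          rw [div_le_div_iff₀ (hμpos i₀) (by norm_num)]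
          nlinarith [hr1 i₀]
        linarith
      have hα1 : α i₀ = 1 := by
        by_contra h
        have h2 : 2 ≤ α i₀ := by omega
        have h2Q : (2:ℚ) ≤ (α i₀ : ℚ) := by exact_mod_cast h2
        have : (1:ℚ) ≤ b i₀ * (α i₀ : ℚ) := by nlinarith
        have hlt := lt_of_le_of_lt
          (Finset.single_le_sum (fun i _ => htermnn i) (Finset.mem_univ i₀)) hsumlt
        linarith
      have hJsum : ∑ i ∈ J, b i * (α i : ℚ) = 1 - r i₀ / (μ i₀ : ℚ) := by
        rw [hi₀, Finset.sum_singleton, hbi i₀, hα1]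
        norm_num
      have hsq : 1 - ∑ i, b i * (α i : ℚ) = q - 1 + r i₀ / (μ i₀ : ℚ) := by
        rw [hsplit, hJsum]
        simp only [hqdef]
        ring
      by_cases hq1 : q = 1
      · -- s = r i₀ / μ i₀
        have hseq : 1 - ∑ i, b i * (α i : ℚ) = r i₀ / (μ i₀ : ℚ) := by
          rw [hsq, hq1]; ring
        have hr₀pos : 0 < r i₀ := by
          by_contra h
          push_neg at h
          have : r i₀ = 0 := le_antisymm h (hr0 i₀)
          rw [hseq, this] at hs
          simp at hs
        refine ⟨r i₀, ?_, μ i₀, by omega, hseq⟩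
        rw [hSdef, Finset.mem_filter]
        exact ⟨Finset.mem_union_left _ (Finset.mem_union_right _ (hrR' i₀)),
          hr₀pos, hr1 i₀⟩
      · -- q < 1, then μ i₀ ≤ N and s ∈ F
        have hqlt : q < 1 := lt_of_le_of_ne hqle hq1
        have hNq1 : (N:ℚ) * q ≤ (N:ℚ) - 1 := by
          have hzz : ((N:ℤ) - z : ℚ) < (N:ℚ) := by
            rw [← hNq]
            nlinarith
          have : ((N:ℤ) - z) < (N:ℤ) := by exact_mod_cast hzz
          have h2 : ((N:ℤ) - z) ≤ (N:ℤ) - 1 := by omega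
          have h3 : ((N:ℤ) - z : ℚ) ≤ ((N:ℤ) - 1 : ℤ) := by exact_mod_cast h2
          rw [hNq]
          push_cast at h3 ⊢
          linarith
        have h1mq : (1:ℚ)/N ≤ 1 - q := by
          rw [div_le_iff₀ hNQpos]
          have hring : (1 - q) * (N:ℚ) = (N:ℚ) - (N:ℚ) * q := by ring
          rw [hring]
          linarith [hNq1]
        have hrm : 1 - q < r i₀ / (μ i₀ : ℚ) := by
          rw [hsq] at hs
          linarith
        have hmN : μ i₀ ≤ N := by
          have h1 : (1:ℚ)/N < r i₀ / (μ i₀ : ℚ) := lt_of_le_of_lt h1mq hrm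
          have h2 : (μ i₀ : ℚ) < N * r i₀ := by
            rw [div_lt_div_iff₀ hNQpos (hμpos i₀)] at h1
            nlinarith
          have h3 : (μ i₀ : ℚ) < (N:ℚ) := by nlinarith [hr1 i₀]
          exact_mod_cast le_of_lt h3
        -- s ∈ F
        have hsF : (1 - ∑ i, b i * (α i : ℚ)) ∈ F := by
          rw [hFdef, Finset.mem_image]
          have hk1 : (0:ℤ) < (N:ℤ) - z := by exact_mod_cast hzbound1
          refine ⟨(((N:ℤ) - z).toNat, (r i₀, μ i₀)), ?_, ?_⟩
          · rw [Finset.mem_product]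
            constructor
            · rw [Finset.mem_range]
              have : ((N:ℤ) - z) ≤ (N:ℤ) := by exact_mod_cast hzbound2
              omega
            · rw [Finset.mem_product]
              refine ⟨hrR' i₀, Finset.mem_range.mpr ?_⟩
              show μ i₀ < N + 1
              omega
          · have hh := Int.toNat_of_nonneg (le_of_lt hk1)
            have hcast : (((N:ℤ) - z).toNat : ℚ) = (N:ℚ) * q := by
              rw [hNq]; exact_mod_cast hh
            simp only
            rw [hcast, hsq, mul_comm, mul_div_assoc,
              div_self (ne_of_gt hNQpos), mul_one]
        refine ⟨1 - ∑ i, b i * (α i : ℚ), ?_, 1, one_pos, by norm_num⟩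
        rw [hSdef, Finset.mem_filter]
        exact ⟨Finset.mem_union_right _ hsF, hs, by linarith⟩
  refine ⟨key, ?_⟩
  intro l hl
  obtain ⟨s', hs', m, hm, heq⟩ := key
  refine ⟨s', Finset.mem_coe.mpr hs', m * l, ?_, ?_⟩
  · exact Nat.one_le_iff_ne_zero.mpr (by positivity)
  · rw [heq]
    have hmQ : (0:ℚ) < m := by exact_mod_cast hm
    have hlQ : (0:ℚ) < l := by exact_mod_cast hl
    push_cast
    rw [div_div]
end

section
/- Let q be a positive natural number and R ⊂ (0,1] a finite set of rational numbers. Then there exists a finite set S ⊂ [0,1] of rational numbers containing R such that: for all r ∈ R, positive natural numbers l, m, and rational b⁺ with q·b⁺ ∈ ℤ and 1 - r/l ≤ b⁺ ≤ 1, the number 1 - (b⁺ - 1 + r/l)/m belongs to Φ(S). -/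
/-- For `q ≥ 1` and a finite set `R ⊂ (0,1]` of rationals there is a finite
set `S ⊂ [0,1]` of rationals containing `R` such that for `r ∈ R`,
`l, m ≥ 1` and rational `b⁺` with `q·b⁺ ∈ ℤ` and `1 - r/l ≤ b⁺ ≤ 1`, the
number `1 - (b⁺ - 1 + r/l)/m` belongs to `Φ(S)`. -/
theorem stmt11 (q : ℕ) (hq : 0 < q) (R : Finset ℚ)
    (hR : ∀ r ∈ R, 0 < r ∧ r ≤ 1) :
    ∃ S : Finset ℚ, (∀ s ∈ S, 0 ≤ s ∧ s ≤ 1) ∧ R ⊆ S ∧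
      ∀ r ∈ R, ∀ l m : ℕ, 0 < l → 0 < m → ∀ bp : ℚ,
        (∃ k : ℤ, (q : ℚ) * bp = k) →
        1 - r / l ≤ bp → bp ≤ 1 →
        (1 - (bp - 1 + r / l) / m) ∈ hyperstd ↑S := by
  classical
  set D : ℕ := ∏ r ∈ R, r.den with hD
  have hDpos : 0 < D := Finset.prod_pos (fun r _ => r.pos)
  have hDqpos : (0 : ℚ) < ((D * q : ℕ) : ℚ) := by
    have : 0 < D * q := Nat.mul_pos hDpos hq
    exact_mod_cast this
  refine ⟨R ∪ (Finset.range (D * q + 1)).image (fun n : ℕ => (n : ℚ) / ((D * q : ℕ) : ℚ)),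
    ?_, Finset.subset_union_left, ?_⟩
  · intro s hs
    rcases Finset.mem_union.1 hs with h | h
    · exact ⟨le_of_lt (hR s h).1, (hR s h).2⟩
    · obtain ⟨n, hn, rfl⟩ := Finset.mem_image.1 h
      have hn' : n ≤ D * q := by
        have := Finset.mem_range.1 hn; omega
      constructor
      · positivity
      · rw [div_le_one hDqpos]
        exact_mod_cast hn'
  · intro r hr l m hl hm bp hk hb1 hb2
    obtain ⟨k, hk⟩ := hk
    have hlQ : (0 : ℚ) < (l : ℚ) := by exact_mod_cast hl
    set s : ℚ := (bp - 1 + r / l) * l with hs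
    have hsl : s = (bp - 1) * l + r := by
      rw [hs]; field_simp
    -- r * D is an integer
    obtain ⟨c, hc⟩ := Finset.dvd_prod_of_mem (fun r : ℚ => r.den) hr
    have hrD : r * (D : ℚ) = (r.num : ℚ) * (c : ℚ) := by
      rw [hD, hc]
      push_cast
      rw [← mul_assoc, Rat.mul_den_eq_num]
    set z : ℤ := (k - q) * l * D + r.num * c * q with hzdef
    have hz : s * ((D * q : ℕ) : ℚ) = (z : ℚ) := by
      rw [hsl, hzdef]
      push_cast
      linear_combination ((l : ℚ) * (D : ℚ)) * hk + (q : ℚ) * hrD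
    have hs0 : 0 ≤ s := by
      rw [hs]
      have : 0 ≤ bp - 1 + r / l := by linarith
      positivity
    have hs1 : s ≤ 1 := by
      have h1 : (bp - 1) * l ≤ 0 :=
        mul_nonpos_of_nonpos_of_nonneg (by linarith) (le_of_lt hlQ)
      have := (hR r hr).2
      rw [hsl]; linarith
    have hz0 : 0 ≤ z := by
      have : (0 : ℚ) ≤ (z : ℚ) := by
        rw [← hz]; exact mul_nonneg hs0 (le_of_lt hDqpos)
      exact_mod_cast this
    have hzD : z ≤ (D * q : ℕ) := by
      have : (z : ℚ) ≤ ((D * q : ℕ) : ℚ) := by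
        rw [← hz]
        calc s * ((D * q : ℕ) : ℚ) ≤ 1 * ((D * q : ℕ) : ℚ) := by
              exact mul_le_mul_of_nonneg_right hs1 (le_of_lt hDqpos)
          _ = ((D * q : ℕ) : ℚ) := one_mul _
      exact_mod_cast this
    refine ⟨s, ?_, l * m, Nat.one_le_iff_ne_zero.2 (by positivity), ?_⟩
    · have hmem : s ∈ (Finset.range (D * q + 1)).image
          (fun n : ℕ => (n : ℚ) / ((D * q : ℕ) : ℚ)) := by
        refine Finset.mem_image.2 ⟨z.toNat, Finset.mem_range.2 (by omega), ?_⟩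
        have hcast : ((z.toNat : ℕ) : ℚ) = (z : ℚ) := by
          exact_mod_cast Int.toNat_of_nonneg hz0
        simp only [hcast, ← hz, mul_div_assoc, div_self (ne_of_gt hDqpos), mul_one]
      exact Finset.mem_coe.2 (Finset.mem_union_right _ hmem)
    · have hmQ : (0 : ℚ) < (m : ℚ) := by exact_mod_cast hm
      rw [hs]
      push_cast
      field_simp
end
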